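/- arXiv:1503.05608 — 2 statements merged into one kernel-verified Lean document; each statement's English description precedes it below -/
import Mathlib

section
/- Let M_1 = (E, I_1), …, M_k = (E, I_k) be matroids on a common finite ground set E, let B ∈ I_1 ∩ … ∩ I_k, and let A ∈ I_1 ∩ … ∩ I_k be partitioned into disjoint sets A_1, …, A_n (each element of A lies in exactly one A_i). Then there exist sets T_1, …, T_n ⊆ B such that each element of B lies in at most k of the sets T_1, …, T_n, and for every i, A_i ∪ (B ∖ T_i) ∈ I_1 ∩ … ∩ I_k. -/
/-- A matroid on a finite ground set, given by its family of independent sets. -/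
structure FinMatroid (E : Type*) [DecidableEq E] [Fintype E] where
  Indep : Finset E → Prop
  empty_indep : Indep ∅
  indep_subset : ∀ ⦃A B : Finset E⦄, Indep B → A ⊆ B → Indep A
  indep_exchange : ∀ ⦃A B : Finset E⦄, Indep A → Indep B → A.card < B.card →
    ∃ x ∈ B \ A, Indep (insert x A)

namespace FinMatroid

open Classical Finset

variable {E : Type*} [DecidableEq E] [Fintype E]

noncomputable def rank (M : FinMatroid E) (S : Finset E) : ℕ :=
  (S.powerset.filter fun J => M.Indep J).sup Finset.card

lemma le_rank (M : FinMatroid E) {J S : Finset E} (hJS : J ⊆ S) (hJ : M.Indep J) :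
    J.card ≤ M.rank S := by
  apply Finset.le_sup
  simp [Finset.mem_filter, Finset.mem_powerset, hJS, hJ]

lemma exists_basis (M : FinMatroid E) (S : Finset E) :
    ∃ J, J ⊆ S ∧ M.Indep J ∧ J.card = M.rank S := by
  have hne : (S.powerset.filter fun J => M.Indep J).Nonempty :=
    ⟨∅, by simp [M.empty_indep]⟩
  obtain ⟨J, hJ, hcard⟩ := Finset.exists_mem_eq_sup _ hne Finset.card
  simp only [Finset.mem_filter, Finset.mem_powerset] at hJ
  exact ⟨J, hJ.1, hJ.2, hcard.symm⟩

lemma rank_le_card (M : FinMatroid E) (S : Finset E) : M.rank S ≤ S.card := by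
  obtain ⟨J, hJS, _, hc⟩ := M.exists_basis S
  rw [← hc]; exact Finset.card_le_card hJS

lemma rank_indep (M : FinMatroid E) {S : Finset E} (h : M.Indep S) : M.rank S = S.card :=
  le_antisymm (M.rank_le_card S) (M.le_rank (subset_refl S) h)

lemma indep_of_rank_eq_card (M : FinMatroid E) {S : Finset E} (h : M.rank S = S.card) :
    M.Indep S := by
  obtain ⟨J, hJS, hJ, hc⟩ := M.exists_basis S
  have : J = S := Finset.eq_of_subset_of_card_le hJS (by omega)
  rwa [← this]

lemma rank_mono (M : FinMatroid E) {S T : Finset E} (h : S ⊆ T) : M.rank S ≤ M.rank T := by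
  obtain ⟨J, hJS, hJ, hc⟩ := M.exists_basis S
  rw [← hc]; exact M.le_rank (hJS.trans h) hJ

/-- Any independent subset of `S` extends to one of full rank inside `S`. -/
lemma exists_basis_superset (M : FinMatroid E) {J S : Finset E} (hJS : J ⊆ S)
    (hJ : M.Indep J) : ∃ K, J ⊆ K ∧ K ⊆ S ∧ M.Indep K ∧ K.card = M.rank S := by
  by_cases h : J.card = M.rank S
  · exact ⟨J, subset_refl J, hJS, hJ, h⟩
  · have hlt : J.card < M.rank S := lt_of_le_of_ne (M.le_rank hJS hJ) h
    obtain ⟨Bs, hBS, hBind, hBc⟩ := M.exists_basis S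
    obtain ⟨x, hx, hxind⟩ := M.indep_exchange hJ hBind (by omega)
    obtain ⟨hx1, hx2⟩ := Finset.mem_sdiff.mp hx
    have hxS : x ∈ S := hBS hx1
    have := M.exists_basis_superset (J := insert x J) (S := S)
      (Finset.insert_subset hxS hJS) hxind
    obtain ⟨K, hK1, hK2, hK3, hK4⟩ := this
    exact ⟨K, (Finset.subset_insert x J).trans hK1, hK2, hK3, hK4⟩
termination_by M.rank S - J.card
decreasing_by
  have : J.card < (insert x J).card := by
    rw [Finset.card_insert_of_notMem hx2]; omega
  omega

lemma rank_submodular (M : FinMatroid E) (S T : Finset E) :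
    M.rank (S ∪ T) + M.rank (S ∩ T) ≤ M.rank S + M.rank T := by
  obtain ⟨J, hJsub, hJ, hJc⟩ := M.exists_basis (S ∩ T)
  obtain ⟨K, hJK, hKsub, hK, hKc⟩ := M.exists_basis_superset
    (hJsub.trans (Finset.inter_subset_left.trans Finset.subset_union_left)) hJ
  have h1 : M.rank S ≥ (K ∩ S).card := M.le_rank Finset.inter_subset_right
    (M.indep_subset hK Finset.inter_subset_left)
  have h2 : M.rank T ≥ (K ∩ T).card := M.le_rank Finset.inter_subset_right
    (M.indep_subset hK Finset.inter_subset_left)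
  have hsplit : (K ∩ S).card + (K ∩ T).card = K.card + (K ∩ (S ∩ T)).card := by
    rw [← Finset.card_union_add_card_inter]
    have : K ∩ S ∪ K ∩ T = K := by
      rw [← Finset.inter_union_distrib_left]
      exact Finset.inter_eq_left.mpr hKsub
    have h4 : (K ∩ S) ∩ (K ∩ T) = K ∩ (S ∩ T) := by
      ext x; simp only [Finset.mem_inter]; tauto
    rw [this, h4]
  have h3 : J.card ≤ (K ∩ (S ∩ T)).card :=
    Finset.card_le_card (Finset.subset_inter hJK hJsub)
  omega

lemma rank_insert_le (M : FinMatroid E) (S : Finset E) (e : E) :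
    M.rank (insert e S) ≤ M.rank S + M.rank {e} := by
  have := M.rank_submodular S {e}
  have h : S ∪ {e} = insert e S := by ext x; simp [or_comm]
  rw [h] at this
  omega

/-- If `e` is spanned by `X` and `X ⊆ Y` with `e ∉ Y`, then `e` is spanned by `Y`. -/
lemma rank_insert_eq_of_subset (M : FinMatroid E) {X Y : Finset E} {e : E}
    (hXY : X ⊆ Y) (heY : e ∉ Y) (h : M.rank (insert e X) = M.rank X) :
    M.rank (insert e Y) = M.rank Y := by
  have hsub := M.rank_submodular (insert e X) Y
  have h1 : insert e X ∪ Y = insert e Y := by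
    rw [Finset.insert_union, Finset.union_eq_right.mpr hXY]
  have h2 : insert e X ∩ Y = X := by
    ext x
    simp only [Finset.mem_inter, Finset.mem_insert]
    constructor
    · rintro ⟨h | h, hY⟩
      · subst h; exact absurd hY heY
      · exact h
    · intro hx; exact ⟨Or.inr hx, hXY hx⟩
  rw [h1, h2, h] at hsub
  have := M.rank_mono (Finset.subset_insert e Y)
  omega


/-- Contraction of a matroid by a non-loop element. -/
def contract (M : FinMatroid E) (e : E) (he : M.Indep {e}) : FinMatroid E where
  Indep S := e ∉ S ∧ M.Indep (insert e S)
  empty_indep := ⟨Finset.notMem_empty e, by simpa using he⟩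
  indep_subset := by
    rintro A B ⟨heB, hB⟩ hAB
    exact ⟨fun h => heB (hAB h), M.indep_subset hB (Finset.insert_subset_insert e hAB)⟩
  indep_exchange := by
    rintro A B ⟨heA, hA⟩ ⟨heB, hB⟩ hlt
    have hlt' : (insert e A).card < (insert e B).card := by
      rw [Finset.card_insert_of_notMem heA, Finset.card_insert_of_notMem heB]; omega
    obtain ⟨x, hx, hxind⟩ := M.indep_exchange hA hB hlt'
    obtain ⟨hx1, hx2⟩ := Finset.mem_sdiff.mp hx
    have hxe : x ≠ e := by
      rintro rfl; exact hx2 (Finset.mem_insert_self _ _)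
    have hxB : x ∈ B := by
      rcases Finset.mem_insert.mp hx1 with h | h
      · exact absurd h hxe
      · exact h
    have hxA : x ∉ A := fun h => hx2 (Finset.mem_insert_of_mem h)
    refine ⟨x, Finset.mem_sdiff.mpr ⟨hxB, hxA⟩, ?_, ?_⟩
    · simp only [Finset.mem_insert]
      push_neg
      exact ⟨Ne.symm hxe, heA⟩
    · rwa [Finset.insert_comm]

lemma rank_contract (M : FinMatroid E) {e : E} (he : M.Indep {e}) {S : Finset E}
    (heS : e ∉ S) : (M.contract e he).rank S + 1 = M.rank (insert e S) := by
  obtain ⟨K, hJK, hKsub, hK, hKc⟩ := M.exists_basis_superset (J := {e})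
    (S := insert e S) (by simp) he
  have heK : e ∈ K := hJK (Finset.mem_singleton_self e)
  have h1 : (M.contract e he).rank S + 1 ≤ M.rank (insert e S) := by
    obtain ⟨J, hJS, ⟨heJ, hJ⟩, hJc⟩ := (M.contract e he).exists_basis S
    rw [← hJc, ← hKc]
    calc J.card + 1 = (insert e J).card := (Finset.card_insert_of_notMem heJ).symm
      _ ≤ M.rank (insert e S) := M.le_rank (Finset.insert_subset_insert e hJS) hJ
      _ ≤ K.card := by rw [hKc]
  have h2 : M.rank (insert e S) ≤ (M.contract e he).rank S + 1 := by
    rw [← hKc]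
    have hKe : K = insert e (K.erase e) := (Finset.insert_erase heK).symm
    have hind : (M.contract e he).Indep (K.erase e) := by
      refine ⟨Finset.notMem_erase e K, ?_⟩
      rwa [← hKe]
    have hsub : K.erase e ⊆ S := by
      intro x hx
      have hxK : x ∈ K := Finset.mem_of_mem_erase hx
      have hxe : x ≠ e := Finset.ne_of_mem_erase hx
      rcases Finset.mem_insert.mp (hKsub hxK) with h | h
      · exact absurd h hxe
      · exact h
    have := (M.contract e he).le_rank hsub hind
    have hc := Finset.card_erase_add_one heK
    omega
  omega


open Classical in
/-- **Matroid partition (covering) theorem**: if `|S| ≤ ∑ rank_j S` for all `S ⊆ G`,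
then `G` can be covered by sets `I_j` independent in the respective matroids. -/
theorem matroid_partition {m : ℕ} : ∀ (G : Finset E) (Ns : Fin m → FinMatroid E),
    (∀ S ⊆ G, S.card ≤ ∑ j, (Ns j).rank S) →
    ∃ Is : Fin m → Finset E, (∀ j, (Ns j).Indep (Is j)) ∧ ∀ x ∈ G, ∃ j, x ∈ Is j := by
  intro G
  induction G using Finset.strongInduction with
  | _ G ih =>
  intro Ns h
  rcases G.eq_empty_or_nonempty with rfl | ⟨e, heG⟩
  · exact ⟨fun _ => ∅, fun j => (Ns j).empty_indep, by simp⟩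
  by_cases hgood : ∃ i, ∃ _ : (Ns i).Indep {e}, ∀ S ⊆ G.erase e,
      S.card + 1 ≤ (∑ j ∈ Finset.univ.erase i, (Ns j).rank S) + (Ns i).rank (insert e S)
  · -- good branch: contract e in matroid i and recurse
    obtain ⟨i, he, hcond⟩ := hgood
    set Ns' := Function.update Ns i ((Ns i).contract e he) with hNs'
    have hNs'i : Ns' i = (Ns i).contract e he := Function.update_self _ _ _
    have hNs'j : ∀ j, j ≠ i → Ns' j = Ns j := fun j hj => Function.update_of_ne hj _ _
    have hsub : G.erase e ⊂ G := Finset.erase_ssubset heG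
    have hyp' : ∀ S ⊆ G.erase e, S.card ≤ ∑ j, (Ns' j).rank S := by
      intro S hS
      have heS : e ∉ S := fun hx => (Finset.mem_erase.mp (hS hx)).1 rfl
      have hsum : ∑ j, (Ns' j).rank S
          = (∑ j ∈ Finset.univ.erase i, (Ns j).rank S) + (Ns' i).rank S := by
        rw [← Finset.sum_erase_add _ _ (Finset.mem_univ i)]
        congr 1
        exact Finset.sum_congr rfl fun j hj => by
          rw [hNs'j j (Finset.mem_erase.mp hj).1]
      have hcr : (Ns' i).rank S + 1 = (Ns i).rank (insert e S) := by
        rw [hNs'i]; exact (Ns i).rank_contract he heS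
      have := hcond S hS
      omega
    obtain ⟨Is', hind', hcov'⟩ := ih (G.erase e) hsub Ns' hyp'
    refine ⟨Function.update Is' i (insert e (Is' i)), ?_, ?_⟩
    · intro j
      by_cases hj : j = i
      · subst hj
        rw [Function.update_self]
        have := hind' j
        rw [hNs'i] at this
        exact this.2
      · rw [Function.update_of_ne hj]
        have := hind' j
        rwa [hNs'j j hj] at this
    · intro x hx
      by_cases hxe : x = e
      · exact ⟨i, by rw [Function.update_self, hxe]; exact Finset.mem_insert_self e _⟩
      · obtain ⟨j, hj⟩ := hcov' x (Finset.mem_erase.mpr ⟨hxe, hx⟩)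
        refine ⟨j, ?_⟩
        by_cases hji : j = i
        · subst hji
          rw [Function.update_self]
          exact Finset.mem_insert_of_mem hj
        · rwa [Function.update_of_ne hji]
  · -- bad branch: derive a contradiction
    exfalso
    push_neg at hgood
    -- for each i with {e} independent in Ns i, choose a violating set
    have hsel : ∀ i, ∃ S, (Ns i).Indep {e} →
        (S ⊆ G.erase e ∧
          (∑ j ∈ Finset.univ.erase i, (Ns j).rank S) + (Ns i).rank (insert e S) ≤ S.card) := by
      intro i
      by_cases hi : (Ns i).Indep {e}
      · obtain ⟨S, hS1, hS2⟩ := hgood i hi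
        exact ⟨S, fun _ => ⟨hS1, by omega⟩⟩
      · exact ⟨∅, fun hc => absurd hc hi⟩
    choose Sel hSel using hsel
    -- tight sets
    have tight_union : ∀ X Y, X ⊆ G → Y ⊆ G →
        X.card = ∑ j, (Ns j).rank X → Y.card = ∑ j, (Ns j).rank Y →
        (X ∪ Y).card = ∑ j, (Ns j).rank (X ∪ Y) := by
      intro X Y hXG hYG hX hY
      have h1 := h (X ∪ Y) (Finset.union_subset hXG hYG)
      have h2 := h (X ∩ Y) (Finset.inter_subset_left.trans hXG)
      have h3 : ∑ j, ((Ns j).rank (X ∪ Y) + (Ns j).rank (X ∩ Y))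
          ≤ ∑ j, ((Ns j).rank X + (Ns j).rank Y) :=
        Finset.sum_le_sum fun j _ => (Ns j).rank_submodular X Y
      rw [Finset.sum_add_distrib, Finset.sum_add_distrib] at h3
      have h4 := Finset.card_union_add_card_inter X Y
      omega
    -- basic facts about the selected sets
    have hSsub : ∀ i, (Ns i).Indep {e} → Sel i ⊆ G.erase e := fun i hi => (hSel i hi).1
    have hStight : ∀ i, (hi : (Ns i).Indep {e}) →
        (Sel i).card = ∑ j, (Ns j).rank (Sel i) ∧
        (Ns i).rank (insert e (Sel i)) = (Ns i).rank (Sel i) := by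
      intro i hi
      have h1 := (hSel i hi).2
      have h2 := h (Sel i) ((hSsub i hi).trans (Finset.erase_subset e G))
      have hsum : ∑ j, (Ns j).rank (Sel i)
          = (∑ j ∈ Finset.univ.erase i, (Ns j).rank (Sel i)) + (Ns i).rank (Sel i) :=
        (Finset.sum_erase_add _ _ (Finset.mem_univ i)).symm
      have hmono := (Ns i).rank_mono (Finset.subset_insert e (Sel i))
      constructor <;> omega
    -- union of all selected sets over independent indices
    set K : Finset (Fin m) := Finset.univ.filter (fun i => (Ns i).Indep {e}) with hK
    have main : ∀ F : Finset (Fin m), (∀ i ∈ F, (Ns i).Indep {e}) →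
        (F.biUnion Sel).card = ∑ j, (Ns j).rank (F.biUnion Sel) ∧
        ∀ i ∈ F, (Ns i).rank (insert e (F.biUnion Sel)) = (Ns i).rank (F.biUnion Sel) := by
      intro F
      induction F using Finset.induction with
      | empty =>
        intro _
        constructor
        · simp only [Finset.biUnion_empty, Finset.card_empty]
          rw [Finset.sum_congr rfl fun j _ => ?_]
          · rw [Finset.sum_const_zero]
          · have := (Ns j).rank_le_card ∅
            simp only [Finset.card_empty] at this
            omega
        · intro i hi; exact absurd hi (Finset.notMem_empty i)
      | @insert a F ha ihF =>
        intro hall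
        have haI : (Ns a).Indep {e} := hall a (Finset.mem_insert_self a F)
        have hFall : ∀ i ∈ F, (Ns i).Indep {e} := fun i hi => hall i (Finset.mem_insert_of_mem hi)
        obtain ⟨ihT, ihSp⟩ := ihF hFall
        have hUeq : (insert a F).biUnion Sel = Sel a ∪ F.biUnion Sel :=
          Finset.biUnion_insert
        have hFsub : F.biUnion Sel ⊆ G.erase e := by
          intro x hx
          obtain ⟨i, hi, hxi⟩ := Finset.mem_biUnion.mp hx
          exact hSsub i (hFall i hi) hxi
        have hUsub : (insert a F).biUnion Sel ⊆ G.erase e := by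
          rw [hUeq]
          exact Finset.union_subset (hSsub a haI) hFsub
        have heU : e ∉ (insert a F).biUnion Sel := fun hx => (Finset.mem_erase.mp (hUsub hx)).1 rfl
        have htight : ((insert a F).biUnion Sel).card = ∑ j, (Ns j).rank ((insert a F).biUnion Sel) := by
          rw [hUeq]
          exact tight_union _ _ ((hSsub a haI).trans (Finset.erase_subset e G))
            (hFsub.trans (Finset.erase_subset e G)) (hStight a haI).1 ihT
        refine ⟨htight, ?_⟩
        intro i hi
        rcases Finset.mem_insert.mp hi with rfl | hiF
        · exact (Ns i).rank_insert_eq_of_subset (by rw [hUeq]; exact Finset.subset_union_left)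
            heU (hStight i haI).2
        · refine (Ns i).rank_insert_eq_of_subset (X := F.biUnion Sel)
            (by rw [hUeq]; exact Finset.subset_union_right) heU (ihSp i hiF)
    obtain ⟨hUt, hUsp⟩ := main K (fun i hi => (Finset.mem_filter.mp hi).2)
    set U := K.biUnion Sel with hU
    have hUG : U ⊆ G.erase e := by
      intro x hx
      obtain ⟨i, hi, hxi⟩ := Finset.mem_biUnion.mp hx
      exact hSsub i (Finset.mem_filter.mp hi).2 hxi
    have heU : e ∉ U := fun hx => (Finset.mem_erase.mp (hUG hx)).1 rfl
    have hfin := h (insert e U)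
      (Finset.insert_subset heG (hUG.trans (Finset.erase_subset e G)))
    have hcard : (insert e U).card = U.card + 1 := Finset.card_insert_of_notMem heU
    have hranks : ∀ j, (Ns j).rank (insert e U) ≤ (Ns j).rank U := by
      intro j
      by_cases hj : (Ns j).Indep {e}
      · exact le_of_eq (hUsp j (Finset.mem_filter.mpr ⟨Finset.mem_univ j, hj⟩))
      · have h0 : (Ns j).rank {e} = 0 := by
          have h1 := (Ns j).rank_le_card {e}
          simp only [Finset.card_singleton] at h1
          rcases Nat.lt_or_ge ((Ns j).rank {e}) 1 with h2 | h2
          · omega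
          · exfalso
            apply hj
            apply (Ns j).indep_of_rank_eq_card
            simp only [Finset.card_singleton]
            omega
        have := (Ns j).rank_insert_le U e
        omega
    have hsum : ∑ j, (Ns j).rank (insert e U) ≤ ∑ j, (Ns j).rank U :=
      Finset.sum_le_sum fun j _ => hranks j
    omega


/-- The minor used in Greene's lemma: subsets of `B` disjoint from `Ai` whose union
with `Ai` is independent. -/
def conMinor (M : FinMatroid E) (B Ai : Finset E) (hAi : M.Indep Ai) : FinMatroid E where
  Indep S := S ⊆ B ∧ Disjoint S Ai ∧ M.Indep (S ∪ Ai)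
  empty_indep := ⟨Finset.empty_subset B, Finset.disjoint_empty_left Ai, by simpa using hAi⟩
  indep_subset := by
    rintro S T ⟨hTB, hTd, hT⟩ hST
    exact ⟨hST.trans hTB, Finset.disjoint_of_subset_left hST hTd,
      M.indep_subset hT (Finset.union_subset_union_left hST)⟩
  indep_exchange := by
    rintro S T ⟨hSB, hSd, hS⟩ ⟨hTB, hTd, hT⟩ hlt
    have hcS : (S ∪ Ai).card = S.card + Ai.card := Finset.card_union_of_disjoint hSd
    have hcT : (T ∪ Ai).card = T.card + Ai.card := Finset.card_union_of_disjoint hTd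
    obtain ⟨x, hx, hxind⟩ := M.indep_exchange hS hT (by omega)
    obtain ⟨hx1, hx2⟩ := Finset.mem_sdiff.mp hx
    have hxAi : x ∉ Ai := fun hc => hx2 (Finset.mem_union_right S hc)
    have hxT : x ∈ T := by
      rcases Finset.mem_union.mp hx1 with h | h
      · exact h
      · exact absurd h hxAi
    have hxS : x ∉ S := fun hc => hx2 (Finset.mem_union_left Ai hc)
    refine ⟨x, Finset.mem_sdiff.mpr ⟨hxT, hxS⟩, Finset.insert_subset (hTB hxT) hSB,
      ?_, ?_⟩
    · rw [Finset.disjoint_left]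
      intro a ha
      rcases Finset.mem_insert.mp ha with rfl | ha'
      · exact hxAi
      · exact Finset.disjoint_left.mp hSd ha'
    · rwa [Finset.insert_union]

lemma rank_conMinor (M : FinMatroid E) {B Ai S : Finset E} (hAi : M.Indep Ai)
    (hSB : S ⊆ B) : (M.conMinor B Ai hAi).rank S + Ai.card = M.rank (S ∪ Ai) := by
  set N := M.conMinor B Ai hAi with hN
  have h1 : N.rank S + Ai.card ≤ M.rank (S ∪ Ai) := by
    obtain ⟨J, hJS, ⟨hJB, hJd, hJ⟩, hJc⟩ := N.exists_basis S
    rw [← hJc, ← Finset.card_union_of_disjoint hJd]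
    exact M.le_rank (Finset.union_subset_union_left hJS) hJ
  have h2 : M.rank (S ∪ Ai) ≤ N.rank S + Ai.card := by
    obtain ⟨K, hAK, hKsub, hK, hKc⟩ := M.exists_basis_superset
      (J := Ai) (S := S ∪ Ai) Finset.subset_union_right hAi
    have hJsub : K \ Ai ⊆ S := fun x hx => by
      obtain ⟨hx1, hx2⟩ := Finset.mem_sdiff.mp hx
      rcases Finset.mem_union.mp (hKsub hx1) with h | h
      · exact h
      · exact absurd h hx2
    have hind : N.Indep (K \ Ai) := by
      refine ⟨hJsub.trans hSB, Finset.sdiff_disjoint, ?_⟩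
      rw [Finset.sdiff_union_of_subset hAK]
      exact hK
    have hle := N.le_rank hJsub hind
    have hc : (K \ Ai).card + Ai.card = K.card := by
      rw [Finset.card_sdiff_of_subset hAK]
      have := Finset.card_le_card hAK
      omega
    omega
  omega

open Classical in
/-- Pullback of a matroid along the projection `E × Fin p → E`. -/
def pullback (N : FinMatroid E) (p : ℕ) : FinMatroid (E × Fin p) where
  Indep Y := Set.InjOn Prod.fst (Y : Set (E × Fin p)) ∧ N.Indep (Y.image Prod.fst)
  empty_indep := ⟨by simp [Set.InjOn], by simpa using N.empty_indep⟩
  indep_subset := by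
    rintro Y Z ⟨hZi, hZ⟩ hYZ
    exact ⟨hZi.mono hYZ, N.indep_subset hZ (Finset.image_subset_image hYZ)⟩
  indep_exchange := by
    rintro Y Z ⟨hYi, hY⟩ ⟨hZi, hZ⟩ hlt
    have hcY : (Y.image Prod.fst).card = Y.card := Finset.card_image_of_injOn hYi
    have hcZ : (Z.image Prod.fst).card = Z.card := Finset.card_image_of_injOn hZi
    obtain ⟨u, hu, huind⟩ := N.indep_exchange hY hZ (by omega)
    obtain ⟨hu1, hu2⟩ := Finset.mem_sdiff.mp hu
    obtain ⟨z, hzZ, hz⟩ := Finset.mem_image.mp hu1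
    have hzY : z ∉ Y := fun hc => hu2 (hz ▸ Finset.mem_image_of_mem Prod.fst hc)
    refine ⟨z, Finset.mem_sdiff.mpr ⟨hzZ, hzY⟩, ?_, ?_⟩
    · intro a ha b hb hab
      simp only [Finset.coe_insert, Set.mem_insert_iff] at ha hb
      rcases ha with rfl | ha <;> rcases hb with rfl | hb
      · rfl
      · exfalso
        apply hu2
        rw [← hz, hab]
        exact Finset.mem_image_of_mem Prod.fst hb
      · exfalso
        apply hu2
        rw [← hz, ← hab]
        exact Finset.mem_image_of_mem Prod.fst ha
      · exact hYi ha hb hab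
    · rw [Finset.image_insert, hz]
      exact huind

open Classical in
lemma rank_pullback_ge (N : FinMatroid E) (p : ℕ) (Y : Finset (E × Fin p)) :
    N.rank (Y.image Prod.fst) ≤ (N.pullback p).rank Y := by
  obtain ⟨W, hWsub, hW, hWc⟩ := N.exists_basis (Y.image Prod.fst)
  have hch : ∀ w : {w // w ∈ W}, ∃ y, y ∈ Y ∧ y.1 = w.1 := by
    rintro ⟨w, hw⟩
    obtain ⟨y, hy, hyw⟩ := Finset.mem_image.mp (hWsub hw)
    exact ⟨y, hy, hyw⟩
  choose g hg1 hg2 using hch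
  set Z : Finset (E × Fin p) := W.attach.image g with hZ
  have hZY : Z ⊆ Y := by
    intro z hz
    obtain ⟨w, _, rfl⟩ := Finset.mem_image.mp hz
    exact hg1 w
  have himg : Z.image Prod.fst = W := by
    rw [hZ, Finset.image_image]
    have : (Prod.fst ∘ g) = fun w : {w // w ∈ W} => w.1 := funext fun w => hg2 w
    rw [this, Finset.attach_image_val]
  have hinj : Set.InjOn Prod.fst (Z : Set (E × Fin p)) := by
    intro a ha b hb hab
    simp only [hZ, Finset.coe_image, Set.mem_image] at ha hb
    obtain ⟨wa, _, rfl⟩ := ha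
    obtain ⟨wb, _, rfl⟩ := hb
    have : wa = wb := Subtype.ext (by rw [← hg2 wa, ← hg2 wb, hab])
    rw [this]
  have hcard : Z.card = W.card := by
    rw [← himg, Finset.card_image_of_injOn hinj]
  rw [← hWc, ← hcard]
  exact (N.pullback p).le_rank hZY ⟨hinj, himg ▸ hW⟩


lemma rank_union_chain (M : FinMatroid E) (S : Finset E) {n : ℕ} (As : Fin n → Finset E) :
    ∀ F : Finset (Fin n), M.rank (S ∪ F.biUnion As) + F.card * M.rank S ≤
      (∑ i ∈ F, M.rank (S ∪ As i)) + M.rank S := by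
  intro F
  induction F using Finset.induction with
  | empty => simp
  | @insert a F ha ihF =>
    rw [Finset.biUnion_insert, Finset.sum_insert ha, Finset.card_insert_of_notMem ha]
    have hsub := M.rank_submodular (S ∪ As a) (S ∪ F.biUnion As)
    have h1 : (S ∪ As a) ∪ (S ∪ F.biUnion As) = S ∪ (As a ∪ F.biUnion As) :=
      (Finset.union_union_distrib_left S (As a) (F.biUnion As)).symm
    have h2 : M.rank S ≤ M.rank ((S ∪ As a) ∩ (S ∪ F.biUnion As)) :=
      M.rank_mono (Finset.subset_inter Finset.subset_union_left Finset.subset_union_left)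
    rw [h1] at hsub
    have h3 : (F.card + 1) * M.rank S = F.card * M.rank S + M.rank S := by ring
    omega

open Classical in
/-- **Greene-type exchange lemma for a single matroid.** -/
theorem greene (M : FinMatroid E) {A B : Finset E} (hA : M.Indep A) (hB : M.Indep B)
    {n : ℕ} (As : Fin n → Finset E) (hAsub : ∀ i, As i ⊆ A)
    (hdisj : ∀ i j, i ≠ j → Disjoint (As i) (As j)) :
    ∃ Ts : Fin n → Finset E, (∀ i, Ts i ⊆ B) ∧
      (∀ x ∈ B, (Finset.univ.filter fun i => x ∈ Ts i).card ≤ 1) ∧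
      (∀ i, M.Indep (As i ∪ (B \ Ts i))) := by
  rcases n with _ | m
  · refine ⟨fun _ => ∅, fun i => i.elim0, fun x _ => ?_, fun i => i.elim0⟩
    simp
  have hAs : ∀ i, M.Indep (As i) := fun i => M.indep_subset hA (hAsub i)
  set N : Fin (m + 1) → FinMatroid E := fun i => M.conMinor B (As i) (hAs i) with hNdef
  set PN : Fin (m + 1) → FinMatroid (E × Fin m) := fun i => (N i).pullback m with hPNdef
  set G : Finset (E × Fin m) := B ×ˢ Finset.univ with hGdef
  -- the rank condition for the partition theorem
  have hyp : ∀ Y ⊆ G, Y.card ≤ ∑ i, (PN i).rank Y := by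
    intro Y hYG
    set S : Finset E := Y.image Prod.fst with hSdef
    have hSB : S ⊆ B := by
      intro x hx
      obtain ⟨y, hy, rfl⟩ := Finset.mem_image.mp hx
      exact (Finset.mem_product.mp (hYG hy)).1
    have hYS : Y ⊆ S ×ˢ Finset.univ := by
      intro y hy
      exact Finset.mem_product.mpr ⟨Finset.mem_image_of_mem Prod.fst hy, Finset.mem_univ _⟩
    have hYcard : Y.card ≤ S.card * m := by
      have := Finset.card_le_card hYS
      rwa [Finset.card_product, Finset.card_univ, Fintype.card_fin] at this
    have hSind : M.Indep S := M.indep_subset hB hSB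
    have hrS : M.rank S = S.card := M.rank_indep hSind
    -- the union of all parts
    set U : Finset E := Finset.univ.biUnion As with hUdef
    have hUind : M.Indep U := M.indep_subset hA (by
      intro x hx
      obtain ⟨i, _, hxi⟩ := Finset.mem_biUnion.mp hx
      exact hAsub i hxi)
    have hUcard : U.card = ∑ i, (As i).card :=
      Finset.card_biUnion fun i _ j _ hij => hdisj i j hij
    have hrU : M.rank U = U.card := M.rank_indep hUind
    have hchain := M.rank_union_chain S As Finset.univ
    rw [Finset.card_univ, Fintype.card_fin, ← hUdef] at hchain
    have hrSU : ∑ i, M.rank (S ∪ As i) = (∑ i, (N i).rank S) + ∑ i, (As i).card := by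
      rw [← Finset.sum_add_distrib]
      exact Finset.sum_congr rfl fun i _ => ((M.rank_conMinor (hAs i) hSB)).symm
    have hUle : U.card ≤ M.rank (S ∪ U) := by
      rw [← hrU]
      exact M.rank_mono Finset.subset_union_right
    have hmul : (m + 1) * M.rank S = m * S.card + S.card := by rw [hrS]; ring
    have hkey : m * S.card ≤ ∑ i, (N i).rank S := by omega
    have hpb : ∑ i, (N i).rank S ≤ ∑ i, (PN i).rank Y :=
      Finset.sum_le_sum fun i _ => (N i).rank_pullback_ge m Y
    calc Y.card ≤ S.card * m := hYcard
      _ = m * S.card := Nat.mul_comm _ _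
      _ ≤ ∑ i, (N i).rank S := hkey
      _ ≤ ∑ i, (PN i).rank Y := hpb
  obtain ⟨Is, hind, hcov⟩ := matroid_partition G PN hyp
  set img : Fin (m + 1) → Finset E := fun i => (Is i).image Prod.fst with himgdef
  refine ⟨fun i => B \ img i, fun i => Finset.sdiff_subset, ?_, ?_⟩
  · -- each x ∈ B misses at most one of the images
    intro x hx
    have hmem : ∀ c : Fin m, ∃ i, (x, c) ∈ Is i := fun c =>
      hcov (x, c) (Finset.mem_product.mpr ⟨hx, Finset.mem_univ c⟩)
    choose phi hphi using hmem
    have hphi_mem : ∀ c, phi c ∈ Finset.univ.filter fun i => x ∈ img i := by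
      intro c
      exact Finset.mem_filter.mpr ⟨Finset.mem_univ _,
        Finset.mem_image_of_mem Prod.fst (hphi c)⟩
    have hphi_inj : Set.InjOn phi (Finset.univ : Finset (Fin m)) := by
      intro c1 _ c2 _ hc
      have h1 := hphi c1
      have h2 := hphi c2
      rw [hc] at h1
      have hinj : Set.InjOn Prod.fst ((Is (phi c2)) : Set (E × Fin m)) :=
        (hind (phi c2)).1
      have heq2 := hinj (Finset.mem_coe.mpr h1) (Finset.mem_coe.mpr h2) rfl
      exact congrArg Prod.snd heq2
    have hcard1 : m ≤ (Finset.univ.filter fun i => x ∈ img i).card := by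
      have := Finset.card_le_card_of_injOn phi (fun c _ => hphi_mem c) hphi_inj
      rwa [Finset.card_univ, Fintype.card_fin] at this
    have hsplit := Finset.card_filter_add_card_filter_not
      (s := (Finset.univ : Finset (Fin (m + 1)))) (p := fun i => x ∈ img i)
    rw [Finset.card_univ, Fintype.card_fin] at hsplit
    have heq : (Finset.univ.filter fun i => x ∈ B \ img i)
        = Finset.univ.filter fun i => ¬ x ∈ img i := by
      apply Finset.filter_congr
      intro i _
      simp [Finset.mem_sdiff, hx]
    rw [heq]
    omega
  · -- independence
    intro i
    have hI := hind i
    obtain ⟨hIB, hId, hIind⟩ := hI.2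
    have himgB : img i ⊆ B := hIB
    have hBdd : B \ (B \ img i) = img i := by
      ext x
      simp only [Finset.mem_sdiff, not_and, not_not]
      constructor
      · rintro ⟨hxB, h2⟩
        exact h2 hxB
      · intro hxi
        exact ⟨himgB hxi, fun _ => hxi⟩
    rw [hBdd, Finset.union_comm]
    exact hIind

end FinMatroid

open Classical in
/-- **Exchange property for intersections of `k` matroids.**
If `A` and `B` are common independent sets of matroids `Ms 0, …, Ms (k−1)` on the
same ground set, and `A` is partitioned into disjoint sets `A₁, …, Aₙ`, then there
exist sets `T₁, …, Tₙ ⊆ B` such that each element of `B` lies in at most `k` of them,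
and `Aᵢ ∪ (B ∖ Tᵢ)` is a common independent set for every `i`. -/
theorem matroid_intersection_exchange
    {E : Type*} [DecidableEq E] [Fintype E]
    (k : ℕ) (Ms : Fin k → FinMatroid E)
    (A B : Finset E) (hA : ∀ j, (Ms j).Indep A) (hB : ∀ j, (Ms j).Indep B)
    (n : ℕ) (As : Fin n → Finset E)
    (hAsub : ∀ i, As i ⊆ A)
    (hdisj : ∀ i j, i ≠ j → Disjoint (As i) (As j))
    (hcover : ∀ x ∈ A, ∃ i, x ∈ As i) :
    ∃ Ts : Fin n → Finset E,
      (∀ i, Ts i ⊆ B) ∧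
      (∀ x ∈ B, (Finset.univ.filter fun i => x ∈ Ts i).card ≤ k) ∧
      (∀ i j, (Ms j).Indep (As i ∪ (B \ Ts i))) := by
  choose TsF hT1 hT2 hT3 using fun j : Fin k =>
    (Ms j).greene (hA j) (hB j) As hAsub hdisj
  refine ⟨fun i => Finset.univ.biUnion fun j => TsF j i, ?_, ?_, ?_⟩
  · intro i
    exact Finset.biUnion_subset.mpr fun j _ => hT1 j i
  · intro x hx
    have hsub : (Finset.univ.filter fun i => x ∈ Finset.univ.biUnion fun j => TsF j i)
        ⊆ Finset.univ.biUnion fun j : Fin k =>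
          Finset.univ.filter fun i => x ∈ TsF j i := by
      intro i hi
      obtain ⟨-, hi2⟩ := Finset.mem_filter.mp hi
      obtain ⟨j, -, hj⟩ := Finset.mem_biUnion.mp hi2
      exact Finset.mem_biUnion.mpr ⟨j, Finset.mem_univ j,
        Finset.mem_filter.mpr ⟨Finset.mem_univ i, hj⟩⟩
    calc (Finset.univ.filter fun i => x ∈ Finset.univ.biUnion fun j => TsF j i).card
        ≤ (Finset.univ.biUnion fun j : Fin k =>
            Finset.univ.filter fun i => x ∈ TsF j i).card := Finset.card_le_card hsub
      _ ≤ ∑ j : Fin k, (Finset.univ.filter fun i => x ∈ TsF j i).card :=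
          Finset.card_biUnion_le
      _ ≤ ∑ _j : Fin k, 1 := Finset.sum_le_sum fun j _ => hT2 j x hx
      _ = k := by simp
  · intro i j
    refine (Ms j).indep_subset (hT3 j i) ?_
    exact Finset.union_subset_union_right
      (Finset.sdiff_subset_sdiff (Finset.Subset.refl B)
        (Finset.subset_biUnion_of_mem (fun j => TsF j i) (Finset.mem_univ j)))
end

section
/- Let q_1, …, q_k ∈ [0, 1] and define x_ℓ = (1 − q_ℓ)·Π_{j=1}^{ℓ−1} q_j for ℓ = 1, …, k. Then for every subset S ⊆ {1, …, k}, Σ_{ℓ∈S} x_ℓ ≤ 1 − Π_{ℓ∈S} q_ℓ, with equality when S = {1, …, |S|} is a prefix. -/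
/-! Over `S`, the sum `Σ_{ℓ∈S} (1 - q ℓ) Π_{j∈S, j<ℓ} q j` telescopes to `1 - Π_{ℓ∈S} q ℓ`.
Since every `q j ∈ [0, 1]`, dropping the factors with `j ∉ S` from `Π_{j<ℓ} q j` can only
increase it, which gives the inequality; for a prefix nothing is dropped. -/

open Finset

theorem Finset.sum_one_sub_mul_prod_filter_lt {ι R : Type*} [LinearOrder ι] [CommRing R]
    (s : Finset ι) (q : ι → R) :
    ∑ i ∈ s, (1 - q i) * ∏ j ∈ s with j < i, q j = 1 - ∏ i ∈ s, q i := by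
  have h := prod_one_sub_ordered s (1 - q)
  simp only [Pi.sub_apply, Pi.one_apply, sub_sub_cancel] at h
  rw [h, sub_sub_cancel]

theorem Finset.range_filter_lt {m ℓ : ℕ} (h : ℓ ≤ m) : {j ∈ range m | j < ℓ} = range ℓ := by
  ext j
  simp only [mem_filter, mem_range]
  omega

/-- **Stopping probabilities satisfy the polymatroid constraints.**
In the cascade model, with continuation probabilities `q 0, …, q (k−1) ∈ [0, 1]`
(slots indexed from `0`), the probability that the ad in slot `ℓ` is the last one
scanned is `x ℓ = (1 − q ℓ)·Π_{j<ℓ} q j`.  Then for every `S ⊆ {0, …, k−1}`,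
`Σ_{ℓ∈S} x ℓ ≤ 1 − Π_{ℓ∈S} q ℓ`, with equality whenever `S` is a prefix
`{0, …, m−1}`. -/
theorem cascade_polymatroid_constraints
    (k : ℕ) (q : ℕ → ℝ) (hq0 : ∀ ℓ, 0 ≤ q ℓ) (hq1 : ∀ ℓ, q ℓ ≤ 1) :
    (∀ S : Finset ℕ, S ⊆ Finset.range k →
      (∑ ℓ ∈ S, (1 - q ℓ) * ∏ j ∈ Finset.range ℓ, q j) ≤ 1 - ∏ ℓ ∈ S, q ℓ) ∧
    (∀ m : ℕ, m ≤ k →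
      (∑ ℓ ∈ Finset.range m, (1 - q ℓ) * ∏ j ∈ Finset.range ℓ, q j) =
        1 - ∏ ℓ ∈ Finset.range m, q ℓ) := by
  refine ⟨fun S _ => ?_, fun m _ => ?_⟩
  · calc ∑ ℓ ∈ S, (1 - q ℓ) * ∏ j ∈ range ℓ, q j
        ≤ ∑ ℓ ∈ S, (1 - q ℓ) * ∏ j ∈ S with j < ℓ, q j := by
          refine sum_le_sum fun ℓ _ => mul_le_mul_of_nonneg_left ?_ (sub_nonneg.2 (hq1 ℓ))
          exact prod_anti_set_of_le_one hq0 hq1 fun j hj => mem_range.2 (mem_filter.1 hj).2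
      _ = 1 - ∏ ℓ ∈ S, q ℓ := sum_one_sub_mul_prod_filter_lt S q
  · rw [← sum_one_sub_mul_prod_filter_lt]
    exact sum_congr rfl fun ℓ hℓ => by rw [range_filter_lt (mem_range.1 hℓ).le]
end
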